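/- With the Concentratable Entanglement C defined as in the NTangled paper, for any two n-qubit pure states ψ and φ, |C(|ψ⟩) − C(|φ⟩)| ≤ 4 |ψ − φ|_tr. -/

import Mathlib

open Matrix BigOperators Complex
open scoped ComplexOrder

noncomputable section

/-- Frobenius (Hilbert–Schmidt) norm `‖X‖₂ = √(Tr(XᴴX))`. -/
def frobNorm {m : Type*} [Fintype m] (X : Matrix m m ℂ) : ℝ :=
  Real.sqrt ((Xᴴ * X).trace.re)

/-- Trace norm (Schatten 1-norm) `‖X‖₁ = Tr √(XᴴX)`. -/
def traceNorm {m : Type*} [Fintype m] [DecidableEq m] (X : Matrix m m ℂ) : ℝ :=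
  (((Matrix.posSemidef_conjTranspose_mul_self X).1.eigenvectorUnitary : Matrix m m ℂ) *
      diagonal ((fun r : ℝ => (r : ℂ)) ∘ (Real.sqrt ·) ∘ (Matrix.posSemidef_conjTranspose_mul_self X).1.eigenvalues) *
      (star (Matrix.posSemidef_conjTranspose_mul_self X).1.eigenvectorUnitary : Matrix m m ℂ)).trace.re

/-- Trace distance `|ρ − σ|_tr = ½‖ρ − σ‖₁`. -/
def traceDist {m : Type*} [Fintype m] [DecidableEq m] (ρ σ : Matrix m m ℂ) : ℝ :=
  traceNorm (ρ - σ) / 2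

/-- Purity `Tr(ρ²)` (real part). -/
def purity {m : Type*} [Fintype m] (ρ : Matrix m m ℂ) : ℝ := ((ρ * ρ).trace).re

/-- Outer product `|ψ⟩⟨ψ|`. -/
def outer {m : Type*} (ψ : m → ℂ) : Matrix m m ℂ :=
  Matrix.of fun a b => ψ a * star (ψ b)

/-- Partial trace over the second tensor factor. -/
def ptraceB {A B : Type*} [Fintype B] (M : Matrix (A × B) (A × B) ℂ) : Matrix A A ℂ :=
  Matrix.of fun a a' => ∑ b, M (a, b) (a', b)

/-- Partial trace over the first tensor factor. -/
def ptraceA {A B : Type*} [Fintype A] (M : Matrix (A × B) (A × B) ℂ) : Matrix B B ℂ :=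
  Matrix.of fun b b' => ∑ a, M (a, b) (a, b')

/-- Index type of the `n`-qubit computational basis. -/
abbrev QIdx (n : ℕ) := Fin n → Fin 2

/-- Merge a bit assignment on `s` with one on its complement. -/
def mergeOn {n : ℕ} (s : Finset (Fin n)) (f : {i // i ∈ s} → Fin 2)
    (g : {i // i ∉ s} → Fin 2) : QIdx n :=
  fun i => if h : i ∈ s then f ⟨i, h⟩ else g ⟨i, h⟩

/-- Reduced density matrix on the qubit subset `s` (partial trace over `sᶜ`). -/
def reduce {n : ℕ} (s : Finset (Fin n)) (ρ : Matrix (QIdx n) (QIdx n) ℂ) :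
    Matrix ({i // i ∈ s} → Fin 2) ({i // i ∈ s} → Fin 2) ℂ :=
  Matrix.of fun f f' => ∑ g : {i // i ∉ s} → Fin 2, ρ (mergeOn s f g) (mergeOn s f' g)

/-- Concentratable Entanglement `C(|ψ⟩) = 1 − 2⁻ⁿ Σ_{α⊆[n]} Tr(ρ_α²)`. -/
def CE {n : ℕ} (ψ : QIdx n → ℂ) : ℝ :=
  1 - (1 / 2 ^ n) * ∑ s : Finset (Fin n), purity (reduce s (outer ψ))

end

/-!
Cut the qubits along `α | αᶜ` and write `ψ` as a matrix `M`, so that `ρ_α = M Mᴴ` and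
`Tr ρ_α² = ‖ρ_α‖²` in the Frobenius norm. Since
`2 (M Mᴴ - N Nᴴ) = (M + N)(M - N)ᴴ + (M - N)(M + N)ᴴ`, every purity moves by at most
`2 ‖ψ + φ‖ ‖ψ - φ‖`. After fixing the global phase of `φ` so that `⟨ψ, φ⟩ ≥ 0`, this product
equals `2 √(1 - |⟨ψ, φ⟩|²)`, which is exactly `‖|ψ⟩⟨ψ| - |φ⟩⟨φ|‖₁`.
-/

open scoped Matrix.Norms.Frobenius InnerProductSpace

section Frobenius

variable {m k : Type*} [Fintype m] [Fintype k]

theorem Matrix.frobenius_norm_sq_eq_sum {α : Type*} [SeminormedAddCommGroup α] (A : Matrix m k α) :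
    ‖A‖ ^ 2 = ∑ i, ∑ j, ‖A i j‖ ^ 2 := by
  change ‖WithLp.toLp 2 fun i => WithLp.toLp 2 (A i)‖ ^ 2 = _
  simp [PiLp.norm_sq_eq_of_L2]

theorem purity_eq_norm_sq {R : Matrix m m ℂ} (hR : R.IsHermitian) : purity R = ‖R‖ ^ 2 := by
  simp only [purity, Matrix.frobenius_norm_sq_eq_sum, Matrix.trace, Matrix.diag, Matrix.mul_apply,
    Complex.re_sum]
  refine Finset.sum_congr rfl fun i _ => Finset.sum_congr rfl fun j _ => ?_
  rw [← hR.apply j i, Complex.star_def, Complex.mul_conj, Complex.normSq_eq_norm_sq]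
  rfl

theorem abs_purity_mul_conjTranspose_sub_le (M N : Matrix m k ℂ) (hM : ‖M‖ ≤ 1) (hN : ‖N‖ ≤ 1) :
    |purity (M * Mᴴ) - purity (N * Nᴴ)| ≤ 2 * (‖M + N‖ * ‖M - N‖) := by
  have norm_le_one {A : Matrix m k ℂ} (hA : ‖A‖ ≤ 1) : ‖A * Aᴴ‖ ≤ 1 :=
    (Matrix.frobenius_norm_mul A Aᴴ).trans <| by
      rw [Matrix.frobenius_norm_conjTranspose]; nlinarith [norm_nonneg A]
  have polarization : (2 : ℝ) • (M * Mᴴ - N * Nᴴ) = (M + N) * (M - N)ᴴ + (M - N) * (M + N)ᴴ := by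
    simp only [Matrix.conjTranspose_add, Matrix.conjTranspose_sub, Matrix.add_mul, Matrix.sub_mul,
      Matrix.mul_add, Matrix.mul_sub, two_smul]
    abel
  have hdiff : ‖M * Mᴴ - N * Nᴴ‖ ≤ ‖M + N‖ * ‖M - N‖ := by
    have h := (norm_add_le _ _).trans (add_le_add (Matrix.frobenius_norm_mul (M + N) (M - N)ᴴ)
      (Matrix.frobenius_norm_mul (M - N) (M + N)ᴴ))
    rw [← polarization, norm_smul, Matrix.frobenius_norm_conjTranspose,
      Matrix.frobenius_norm_conjTranspose] at h
    norm_num at h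
    linarith
  rw [purity_eq_norm_sq (Matrix.isHermitian_mul_conjTranspose_self M),
    purity_eq_norm_sq (Matrix.isHermitian_mul_conjTranspose_self N), sq_sub_sq, abs_mul,
    abs_of_nonneg (by positivity : 0 ≤ ‖M * Mᴴ‖ + ‖N * Nᴴ‖)]
  calc (‖M * Mᴴ‖ + ‖N * Nᴴ‖) * |‖M * Mᴴ‖ - ‖N * Nᴴ‖|
      ≤ 2 * ‖M * Mᴴ - N * Nᴴ‖ :=
        mul_le_mul (by linarith [norm_le_one hM, norm_le_one hN]) (abs_norm_sub_norm_le _ _)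
          (abs_nonneg _) zero_le_two
    _ ≤ 2 * (‖M + N‖ * ‖M - N‖) := by gcongr

end Frobenius

section QubitCut

variable {n : ℕ} (s : Finset (Fin n))

def mergeOnEquiv : (({i // i ∈ s} → Fin 2) × ({i // i ∉ s} → Fin 2)) ≃ QIdx n where
  toFun p := mergeOn s p.1 p.2
  invFun x := (fun i => x i, fun i => x i)
  left_inv p := by ext i <;> simp [mergeOn, i.2]
  right_inv x := by funext i; by_cases h : i ∈ s <;> simp [mergeOn, h]

def coeffMatrix (ψ : QIdx n → ℂ) : Matrix ({i // i ∈ s} → Fin 2) ({i // i ∉ s} → Fin 2) ℂ :=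
  Matrix.of fun f g => ψ (mergeOn s f g)

theorem reduce_outer (ψ : QIdx n → ℂ) :
    reduce s (outer ψ) = coeffMatrix s ψ * (coeffMatrix s ψ)ᴴ := by
  ext f f'
  simp [reduce, outer, coeffMatrix, Matrix.mul_apply]

theorem norm_coeffMatrix (x : EuclideanSpace ℂ (QIdx n)) : ‖coeffMatrix s x‖ = ‖x‖ := by
  rw [← sq_eq_sq₀ (norm_nonneg _) (norm_nonneg _), Matrix.frobenius_norm_sq_eq_sum,
    EuclideanSpace.norm_sq_eq, ← Fintype.sum_prod_type', ← (mergeOnEquiv s).sum_comp]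
  rfl

end QubitCut

theorem abs_CE_sub_CE_le {n : ℕ} (x y : EuclideanSpace ℂ (QIdx n)) (hx : ‖x‖ = 1) (hy : ‖y‖ = 1) :
    |CE x - CE y| ≤ 2 * (‖x + y‖ * ‖x - y‖) := by
  have hsubset (s : Finset (Fin n)) :
      |purity (reduce s (outer y)) - purity (reduce s (outer x))| ≤ 2 * (‖x + y‖ * ‖x - y‖) := by
    rw [abs_sub_comm, reduce_outer, reduce_outer, ← norm_coeffMatrix s (x + y),
      ← norm_coeffMatrix s (x - y)]
    exact abs_purity_mul_conjTranspose_sub_le _ _ (norm_coeffMatrix s x ▸ hx.le)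
      (norm_coeffMatrix s y ▸ hy.le)
  have hdiff : CE x - CE y = (2 ^ n)⁻¹ *
      ∑ s : Finset (Fin n), (purity (reduce s (outer y)) - purity (reduce s (outer x))) := by
    simp only [CE, Finset.sum_sub_distrib]
    ring
  rw [hdiff, abs_mul, abs_of_pos (by positivity), inv_mul_le_iff₀ (by positivity)]
  refine (Finset.abs_sum_le_sum_abs _ _).trans
    ((Finset.sum_le_card_nsmul _ _ _ fun s _ => hsubset s).trans_eq ?_)
  simp

section Outer

variable {I : Type*}

theorem outer_eq_vecMulVec (ψ : I → ℂ) : outer ψ = Matrix.vecMulVec ψ (star ψ) := rfl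

theorem outer_smul_of_norm_eq_one {u : ℂ} (hu : ‖u‖ = 1) (ψ : I → ℂ) :
    outer (u • ψ) = outer ψ := by
  have huu : u * starRingEnd ℂ u = 1 := by rw [Complex.mul_conj', hu]; simp
  ext a b
  simp only [outer, Matrix.of_apply, Pi.smul_apply, smul_eq_mul, star_mul', Complex.star_def]
  linear_combination (ψ a * starRingEnd ℂ (ψ b)) * huu

variable [Fintype I]

theorem posSemidef_outer (ψ : I → ℂ) : (outer ψ).PosSemidef :=
  Matrix.posSemidef_vecMulVec_self_star ψ

theorem outer_mul_outer (x y : EuclideanSpace ℂ I) :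
    outer x * outer y = ⟪x, y⟫_ℂ • Matrix.vecMulVec x (star y) := by
  rw [outer_eq_vecMulVec, outer_eq_vecMulVec, Matrix.vecMulVec_mul_vecMulVec,
    Matrix.vecMulVec_smul, EuclideanSpace.inner_eq_star_dotProduct, dotProduct_comm]

theorem trace_outer (x : EuclideanSpace ℂ I) : (outer x).trace = ⟪x, x⟫_ℂ := by
  rw [outer_eq_vecMulVec, Matrix.trace_vecMulVec, EuclideanSpace.inner_eq_star_dotProduct]

theorem outer_sub_outer_mul_self {x y : EuclideanSpace ℂ I} (hx : ‖x‖ = 1) (hy : ‖y‖ = 1) :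
    (outer x - outer y) * (outer x - outer y)
      = (1 - ‖⟪x, y⟫_ℂ‖ ^ 2 : ℝ) • outer x + outer (y - ⟪x, y⟫_ℂ • x) := by
  have hyx : ⟪y, x⟫_ℂ = starRingEnd ℂ ⟪x, y⟫_ℂ := (inner_conj_symm y x).symm
  have hcc := Complex.mul_conj' ⟪x, y⟫_ℂ
  obtain ⟨c, hxy⟩ : ∃ c, ⟪x, y⟫_ℂ = c := ⟨_, rfl⟩
  rw [hxy] at hyx hcc ⊢
  simp only [sub_mul, mul_sub, outer_mul_outer, inner_self_eq_norm_sq_to_K, hx, hy, hxy, hyx]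
  ext i j
  simp [outer, Matrix.vecMulVec_apply]
  linear_combination (-(x i * starRingEnd ℂ (x j))) * hcc

theorem smul_outer_add_smul_outer_mul_self {x w : EuclideanSpace ℂ I} (hx : ‖x‖ = 1)
    (hxw : ⟪x, w⟫_ℂ = 0) (a b : ℝ) :
    (a • outer x + b • outer w) * (a • outer x + b • outer w)
      = a ^ 2 • outer x + (b ^ 2 * ‖w‖ ^ 2) • outer w := by
  have hwx : ⟪w, x⟫_ℂ = 0 := by rw [← inner_conj_symm, hxw, map_zero]
  simp only [add_mul, mul_add, Matrix.smul_mul, Matrix.mul_smul, outer_mul_outer, hxw, hwx,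
    inner_self_eq_norm_sq_to_K, hx, zero_smul, smul_zero, add_zero, zero_add, smul_smul,
    ← outer_eq_vecMulVec]
  match_scalars <;> ring

end Outer

section TraceNorm

variable {I : Type*} [Fintype I] [DecidableEq I]

open scoped MatrixOrder in
theorem traceNorm_eq_re_trace_of_mul_self_eq {X B : Matrix I I ℂ} (hB : B.PosSemidef)
    (hBX : B * B = Xᴴ * X) : traceNorm X = B.trace.re := by
  have hXX := Matrix.posSemidef_conjTranspose_mul_self X
  have hsqrt : cfc Real.sqrt (Xᴴ * X) = B := by
    rw [← cfcₙ_eq_cfc (hf0 := by simp), ← CFC.sqrt_eq_real_sqrt _ hXX.nonneg]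
    exact CFC.sqrt_unique hBX hB.nonneg
  rw [traceNorm, ← hsqrt, hXX.1.cfc_eq, Matrix.IsHermitian.cfc, Unitary.conjStarAlgAut_apply]
  rfl

theorem traceNorm_outer_sub_outer {x y : EuclideanSpace ℂ I} (hx : ‖x‖ = 1) (hy : ‖y‖ = 1) :
    traceNorm (outer x - outer y) = 2 * √(1 - ‖⟪x, y⟫_ℂ‖ ^ 2) := by
  set c := ⟪x, y⟫_ℂ
  set w := y - c • x
  set D := √(1 - ‖c‖ ^ 2)
  have hc : ‖c‖ ≤ 1 := by simpa [hx, hy] using norm_inner_le_norm (𝕜 := ℂ) x y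
  have hD : D ^ 2 = 1 - ‖c‖ ^ 2 := Real.sq_sqrt (by nlinarith [norm_nonneg c])
  have hxw : ⟪x, w⟫_ℂ = 0 := by simp [w, inner_self_eq_norm_sq_to_K, hx, c]
  have hw : ‖w‖ ^ 2 = D ^ 2 := by
    have h := norm_add_sq_eq_norm_sq_add_norm_sq_of_inner_eq_zero (𝕜 := ℂ) w (c • x) (by
      rw [inner_smul_right, ← inner_conj_symm, hxw, map_zero, mul_zero])
    rw [sub_add_cancel, hy, norm_smul, hx, mul_one] at h
    rw [hD]; linarith
  -- `w ⊥ x` and `‖w‖ = D`, so `B` is the positive square root of `(|x⟩⟨x| - |y⟩⟨y|)²`.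
  set B := D • outer x + D⁻¹ • outer w
  have hB : B.PosSemidef :=
    ((posSemidef_outer _).smul (Real.sqrt_nonneg _)).add
      ((posSemidef_outer _).smul (inv_nonneg.2 (Real.sqrt_nonneg _)))
  have hBB : B * B = (outer x - outer y)ᴴ * (outer x - outer y) := by
    rw [smul_outer_add_smul_outer_mul_self hx hxw, Matrix.conjTranspose_sub,
      (posSemidef_outer _).isHermitian.eq, (posSemidef_outer _).isHermitian.eq,
      outer_sub_outer_mul_self hx hy, ← hD, hw]
    congr 1
    change _ = outer w
    rcases eq_or_ne D 0 with h0 | h0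
    · have : w = 0 := by simpa [h0] using hw
      simp [this, outer_eq_vecMulVec]
    · rw [inv_pow, inv_mul_cancel₀ (pow_ne_zero 2 h0), one_smul]
  rw [traceNorm_eq_re_trace_of_mul_self_eq hB hBB, Matrix.trace_add, Matrix.trace_smul,
    Matrix.trace_smul, trace_outer, trace_outer]
  have hxx : ⟪x, x⟫_ℂ = 1 := by simp [hx]
  have hww : ⟪w, w⟫_ℂ = (D ^ 2 : ℝ) := by simp [← hw]
  simp only [hxx, hww, Complex.add_re, Complex.smul_re, Complex.one_re, Complex.ofReal_re,
    smul_eq_mul]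
  rw [mul_one, inv_mul_eq_div, sq, mul_self_div_self]
  ring

end TraceNorm

theorem norm_add_mul_norm_sub_eq {𝕜 E : Type*} [RCLike 𝕜] [NormedAddCommGroup E]
    [InnerProductSpace 𝕜 E] {x y : E} (hx : ‖x‖ = 1) (hy : ‖y‖ = 1) :
    ‖x + y‖ * ‖x - y‖ = 2 * √(1 - RCLike.re ⟪x, y⟫_𝕜 ^ 2) := by
  have h : (‖x + y‖ * ‖x - y‖) ^ 2 = 2 ^ 2 * (1 - RCLike.re ⟪x, y⟫_𝕜 ^ 2) := by
    rw [mul_pow, norm_add_sq (𝕜 := 𝕜), norm_sub_sq (𝕜 := 𝕜), hx, hy]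
    ring
  rw [← Real.sqrt_sq (by positivity : 0 ≤ ‖x + y‖ * ‖x - y‖), h, Real.sqrt_mul (by norm_num),
    Real.sqrt_sq zero_le_two]

theorem Complex.exists_norm_eq_one_mul_eq_norm (c : ℂ) : ∃ u : ℂ, ‖u‖ = 1 ∧ u * c = ‖c‖ := by
  refine ⟨exp (↑(-arg c) * I), norm_exp_ofReal_mul_I _, ?_⟩
  calc exp (↑(-arg c) * I) * c = exp (↑(-arg c) * I) * (‖c‖ * exp (arg c * I)) := by
        rw [norm_mul_exp_arg_mul_I]
    _ = ‖c‖ := by rw [mul_left_comm, ← Complex.exp_add]; push_cast; simp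

theorem norm_toLp_eq_sqrt {I : Type*} [Fintype I] (ψ : I → ℂ) :
    ‖WithLp.toLp 2 ψ‖ = √(∑ i, Complex.normSq (ψ i)) := by
  simp [EuclideanSpace.norm_eq, Complex.normSq_eq_norm_sq]

/-- Continuity of Concentratable Entanglement: `|C(ψ) − C(φ)| ≤ 4 |ψ − φ|_tr`. -/
theorem stmt_7 {n : ℕ} (ψ φ : QIdx n → ℂ)
    (hψ : ∑ f, Complex.normSq (ψ f) = 1) (hφ : ∑ f, Complex.normSq (φ f) = 1) :
    |CE ψ - CE φ| ≤ 4 * traceDist (outer ψ) (outer φ) := by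
  set x : EuclideanSpace ℂ (QIdx n) := WithLp.toLp 2 ψ
  set y : EuclideanSpace ℂ (QIdx n) := WithLp.toLp 2 φ
  have hx : ‖x‖ = 1 := by rw [norm_toLp_eq_sqrt, hψ, Real.sqrt_one]
  have hy : ‖y‖ = 1 := by rw [norm_toLp_eq_sqrt, hφ, Real.sqrt_one]
  obtain ⟨u, hu, huc⟩ := Complex.exists_norm_eq_one_mul_eq_norm ⟪x, y⟫_ℂ
  have huy : ‖u • y‖ = 1 := by rw [norm_smul, hu, hy, one_mul]
  have hre : RCLike.re ⟪x, u • y⟫_ℂ = ‖⟪x, y⟫_ℂ‖ := by rw [inner_smul_right, huc]; rfl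
  have hCE : CE φ = CE (u • y) := by
    rw [CE, CE, WithLp.ofLp_smul, outer_smul_of_norm_eq_one hu]
  calc |CE ψ - CE φ| = |CE x - CE (u • y)| := by rw [hCE]
    _ ≤ 2 * (‖x + u • y‖ * ‖x - u • y‖) := abs_CE_sub_CE_le x (u • y) hx huy
    _ = 2 * traceNorm (outer ψ - outer φ) := by
      rw [norm_add_mul_norm_sub_eq (𝕜 := ℂ) hx huy, hre, traceNorm_outer_sub_outer hx hy]
    _ = 4 * traceDist (outer ψ) (outer φ) := by rw [traceDist]; ring
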